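/- arXiv:2307.01272 — 4 statements merged into one kernel-verified Lean document; each statement's English description precedes it below -/
import Mathlib

section
/- For all integers n ≥ 0 and all odd integers t ≥ 1, the number of t-colored overpartitions of 8n+6 is divisible by 8, i.e., p̄_{-t}(8n+6) ≡ 0 (mod 8). -/
open scoped Classical

/-- The infinite product `∏_{k ≥ 0} f k` of formal power series, in the situation where,
for each fixed power of `q`, only finitely many factors contribute: the coefficient of
`q^n` is read off from the product of the factors `f 0, …, f n` (all later factors are
assumed to be `1 + O(q^{n+1})`). -/
noncomputable def seriesProd (f : ℕ → PowerSeries ℤ) : PowerSeries ℤ :=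
  PowerSeries.mk fun n => PowerSeries.coeff n (∏ k ∈ Finset.range (n + 1), f k)

/-- The generating function `∏_{k ≥ 1} (1 - q^{2k})^t / (1 - q^k)^{2t}`
for `t`-colored overpartitions. -/
noncomputable def overGF (t : ℕ) : PowerSeries ℤ :=
  seriesProd fun k =>
    (1 - (PowerSeries.X : PowerSeries ℤ) ^ (2 * (k + 1))) ^ t *
      (PowerSeries.invOfUnit (1 - (PowerSeries.X : PowerSeries ℤ) ^ (k + 1)) 1) ^ (2 * t)

/-- `p̄_{-t}(n)`, the number of `t`-colored overpartitions of `n`: the coefficient of `q^n`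
in `∏_{k ≥ 1} (1 - q^{2k})^t / (1 - q^k)^{2t}`. -/
noncomputable def pbar (t n : ℕ) : ℤ :=
  PowerSeries.coeff n (overGF t)

/-- Ramanujan's theta function `φ(q^m) = 1 + 2 ∑_{k ≥ 1} q^{m k²}`. -/
noncomputable def phi (m : ℕ) : PowerSeries ℤ :=
  PowerSeries.mk fun n =>
    if n = 0 then 1 else if ∃ k : ℕ, 0 < k ∧ n = m * k ^ 2 then 2 else 0

/-- `φ(-q) = 1 + 2 ∑_{k ≥ 1} (-1)^{k²} q^{k²}` (note `(-1)^{k²} = (-1)^n` at `n = k²`). -/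
noncomputable def phiNeg : PowerSeries ℤ :=
  PowerSeries.mk fun n =>
    if n = 0 then 1 else if ∃ k : ℕ, 0 < k ∧ n = k ^ 2 then 2 * (-1) ^ n else 0

/-- Ramanujan's theta function `ψ(q^m) = ∑_{k ≥ 0} q^{m·k(k+1)/2}`. -/
noncomputable def psi (m : ℕ) : PowerSeries ℤ :=
  PowerSeries.mk fun n => if ∃ k : ℕ, 2 * n = m * (k * (k + 1)) then 1 else 0

/-- `f_r = ∏_{j ≥ 1} (1 - q^{r j})`. -/
noncomputable def fr (r : ℕ) : PowerSeries ℤ :=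
  seriesProd fun j => 1 - (PowerSeries.X : PowerSeries ℤ) ^ (r * (j + 1))

/-!
Gauss's identity `φ(-q) f₂ = f₁²` says that the generating function of `p̄_{-t}` is
`φ(-q)⁻ᵗ`. Writing `φ(-q) = 1 + 2B` with `B = ∑_{k ≥ 1} (-1)^k q^{k²}`, we get `φ(-q)⁴ ≡ 1`
and hence `φ(-q)⁻ᵗ ≡ φ(-q)^{3t} ≡ 1 + 6t B + 4 binom(3t, 2) B² (mod 8)`. No square and no sum of
two squares is `≡ 6 (mod 8)`, so `B` and `B²` have no `q^{8n+6}` term.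

Gauss's identity is the limit `N → ∞` of the finite Jacobi triple product
`∏_{j<N} (q^{2j+1} + z)(1 + q^{2j+1} z) = ∑_m [2N, m]_{q²} q^{(m-N)²} z^m` at `z = -1`: modulo
`X^n` every `q²`-binomial coefficient that survives is `≡ 1 / f₂` once `N ≥ 2n`.
-/

open PowerSeries Finset

section Truncation

variable {R : Type*} [CommRing R]

noncomputable abbrev modXPow (n : ℕ) : R⟦X⟧ →+* R⟦X⟧ ⧸ Ideal.span {(X : R⟦X⟧) ^ n} :=
  Ideal.Quotient.mk _

theorem modXPow_eq_iff {n : ℕ} {A B : R⟦X⟧} :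
    modXPow n A = modXPow n B ↔ ∀ m < n, coeff m A = coeff m B := by
  simp only [Ideal.Quotient.eq, Ideal.mem_span_singleton, X_pow_dvd_iff, map_sub, sub_eq_zero]

theorem coeff_eq_of_modXPow_eq {n : ℕ} {A B : R⟦X⟧}
    (h : modXPow (n + 1) A = modXPow (n + 1) B) : coeff n A = coeff n B :=
  modXPow_eq_iff.mp h n n.lt_succ_self

theorem ext_modXPow {A B : R⟦X⟧} (h : ∀ n, modXPow n A = modXPow n B) : A = B :=
  ext fun n => coeff_eq_of_modXPow_eq (h (n + 1))

theorem modXPow_eq_of_le {n m : ℕ} (hnm : n ≤ m) {A B : R⟦X⟧}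
    (h : modXPow m A = modXPow m B) : modXPow n A = modXPow n B :=
  modXPow_eq_iff.mpr fun j hj => modXPow_eq_iff.mp h j (hj.trans_le hnm)

theorem modXPow_X_pow {n e : ℕ} (h : n ≤ e) : modXPow n (X ^ e : R⟦X⟧) = 0 :=
  Ideal.Quotient.eq_zero_iff_mem.mpr (Ideal.mem_span_singleton.mpr (pow_dvd_pow X h))

theorem modXPow_one_sub_X_pow {n e : ℕ} (h : n ≤ e) : modXPow n (1 - X ^ e : R⟦X⟧) = 1 := by
  rw [map_sub, map_one, modXPow_X_pow h, sub_zero]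

end Truncation

section SeriesProd

variable {f : ℕ → ℤ⟦X⟧}

theorem modXPow_prod_range_eq (hf : ∀ k, modXPow (k + 1) (f k) = 1) {n m : ℕ} (h : n ≤ m) :
    modXPow n (∏ k ∈ range m, f k) = modXPow n (∏ k ∈ range n, f k) := by
  have htail : modXPow n (∏ k ∈ Ico n m, f k) = 1 := by
    rw [map_prod]
    exact prod_eq_one fun k hk => modXPow_eq_of_le (by simp at hk; omega) (hf k)
  rw [← prod_range_mul_prod_Ico f h, map_mul, htail, mul_one]

theorem modXPow_seriesProd (hf : ∀ k, modXPow (k + 1) (f k) = 1) {n m : ℕ} (h : n ≤ m) :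
    modXPow n (seriesProd f) = modXPow n (∏ k ∈ range m, f k) := by
  refine modXPow_eq_iff.mpr fun j hj => ?_
  rw [seriesProd, coeff_mk]
  exact coeff_eq_of_modXPow_eq (modXPow_prod_range_eq hf (by omega)).symm

end SeriesProd

section GaussianBinomial

variable {R : Type*} [CommRing R] (Q : R)

def gaussianBinomial : ℕ → ℕ → R
  | _, 0 => 1
  | 0, _ + 1 => 0
  | n + 1, k + 1 => gaussianBinomial n k + Q ^ (k + 1) * gaussianBinomial n (k + 1)

@[simp] theorem gaussianBinomial_zero_right (n : ℕ) : gaussianBinomial Q n 0 = 1 := by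
  cases n <;> rfl

@[simp] theorem gaussianBinomial_zero_succ (k : ℕ) : gaussianBinomial Q 0 (k + 1) = 0 := rfl

theorem gaussianBinomial_succ_succ (n k : ℕ) :
    gaussianBinomial Q (n + 1) (k + 1) =
      gaussianBinomial Q n k + Q ^ (k + 1) * gaussianBinomial Q n (k + 1) := rfl

theorem gaussianBinomial_eq_zero_of_lt {n k : ℕ} (h : n < k) : gaussianBinomial Q n k = 0 := by
  induction n generalizing k with
  | zero => obtain ⟨k, rfl⟩ := Nat.exists_eq_succ_of_ne_zero h.ne'; rfl
  | succ n ih =>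
    obtain ⟨k, rfl⟩ := Nat.exists_eq_succ_of_ne_zero (n.succ_pos.trans h).ne'
    rw [gaussianBinomial_succ_succ, ih (by omega), ih (by omega), mul_zero, add_zero]

@[simp] theorem gaussianBinomial_self (n : ℕ) : gaussianBinomial Q n n = 1 := by
  induction n with
  | zero => rfl
  | succ n ih =>
    rw [gaussianBinomial_succ_succ, ih, gaussianBinomial_eq_zero_of_lt Q n.lt_succ_self,
      mul_zero, add_zero]

theorem gaussianBinomial_succ_succ' {n k d : ℕ} (h : k + d = n) :
    gaussianBinomial Q (n + 1) (k + 1) =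
      gaussianBinomial Q n (k + 1) + Q ^ d * gaussianBinomial Q n k := by
  induction k generalizing n d with
  | zero =>
    subst h
    induction d with
    | zero => simp
    | succ d ih =>
      rw [zero_add] at ih ⊢
      have p1 := gaussianBinomial_succ_succ Q (d + 1) 0
      have p2 := gaussianBinomial_succ_succ Q d 0
      simp only [gaussianBinomial_zero_right, zero_add] at p1 p2 ih ⊢
      linear_combination p1 + Q * ih - p2
  | succ k ihk =>
    induction d generalizing n with
    | zero =>
      subst h
      rw [gaussianBinomial_self, gaussianBinomial_self,
        gaussianBinomial_eq_zero_of_lt Q (Nat.lt_succ_self _)]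
      ring
    | succ d ihd =>
      obtain ⟨m, rfl⟩ : ∃ m, n = m + 1 := ⟨k + d + 1, by omega⟩
      have h1 := ihk (n := m) (d := d + 1) (by omega)
      have h2 := ihd (n := m) (by omega)
      have p1 := gaussianBinomial_succ_succ Q (m + 1) (k + 1)
      have p2 := gaussianBinomial_succ_succ Q m k
      have p3 := gaussianBinomial_succ_succ Q m (k + 1)
      linear_combination p1 + h1 - Q ^ (d + 1) * p2 - p3 + Q ^ (k + 2) * h2

def qPochhammer (n : ℕ) : R := ∏ i ∈ range n, (1 - Q ^ (i + 1))

theorem qPochhammer_succ (n : ℕ) :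
    qPochhammer Q (n + 1) = qPochhammer Q n * (1 - Q ^ (n + 1)) :=
  prod_range_succ _ n

theorem gaussianBinomial_mul_qPochhammer_mul_qPochhammer {n k l : ℕ} (h : k + l = n) :
    gaussianBinomial Q n k * qPochhammer Q k * qPochhammer Q l = qPochhammer Q n := by
  induction k generalizing n l with
  | zero => subst h; simp [qPochhammer]
  | succ k ihk =>
    induction l generalizing n with
    | zero => subst h; simp [qPochhammer]
    | succ l ihl =>
      obtain rfl : n = k + l + 1 + 1 := by omega
      have h1 := ihk (n := k + l + 1) (l := l + 1) (by omega)
      have h2 := ihl (n := k + l + 1) (by omega)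
      rw [gaussianBinomial_succ_succ]
      simp only [qPochhammer_succ] at h1 h2 ⊢
      linear_combination (1 - Q ^ (k + 1)) * h1 + Q ^ (k + 1) * (1 - Q ^ (l + 1)) * h2

end GaussianBinomial

section JacobiTripleProduct

def sqDist (b m : ℕ) : ℕ := ((m : ℤ) - b).natAbs ^ 2

theorem natCast_sqDist (b m : ℕ) : (sqDist b m : ℤ) = ((m : ℤ) - b) ^ 2 := by
  simp [sqDist]

theorem sqDist_self (N : ℕ) : sqDist N N = 0 := by simp [sqDist]

theorem sqDist_sub {N j : ℕ} (h : j ≤ N) : sqDist N (N - j) = j ^ 2 := by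
  zify [natCast_sqDist, h]; ring

theorem sqDist_add (N j : ℕ) : sqDist N (N + j) = j ^ 2 := by
  zify [natCast_sqDist]; ring

theorem sqDist_succ_succ (b m : ℕ) : sqDist (b + 1) (m + 1) = sqDist b m := by
  zify [natCast_sqDist]; ring

theorem sqDist_succ_zero (b : ℕ) : sqDist (b + 1) 0 = sqDist b 0 + (2 * b + 1) := by
  zify [natCast_sqDist]; ring

theorem sqDist_succ_right_add (b m : ℕ) :
    sqDist b (m + 1) + (2 * b + 1) = sqDist b m + 2 * (m + 1) := by
  zify [natCast_sqDist]; ring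

theorem sqDist_add_of_add_eq {a b m d : ℕ} (h : m + d = a + b) :
    sqDist b m + (2 * a + 1) = sqDist b (m + 1) + 2 * d := by
  zify [natCast_sqDist] at h ⊢; linear_combination (-2) * h

variable {R : Type*} [CommRing R] (q : R)

/-- `∏_{j<a} (1 + q^{2j+1} z) ∏_{j<b} (1 + q^{2j+1} z⁻¹)`, multiplied by `z^b` to make it a
polynomial in `z`. -/
noncomputable def jacobiPoly (a b : ℕ) : Polynomial R :=
  (∏ j ∈ range b, (Polynomial.C (q ^ (2 * j + 1)) + Polynomial.X)) *
    ∏ j ∈ range a, (1 + Polynomial.C (q ^ (2 * j + 1)) * Polynomial.X)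

theorem jacobiPoly_succ_left (a b : ℕ) :
    jacobiPoly q (a + 1) b =
      jacobiPoly q a b * (1 + Polynomial.C (q ^ (2 * a + 1)) * Polynomial.X) := by
  rw [jacobiPoly, jacobiPoly, prod_range_succ, mul_assoc]

theorem jacobiPoly_succ_right (a b : ℕ) :
    jacobiPoly q a (b + 1) =
      jacobiPoly q a b * (Polynomial.C (q ^ (2 * b + 1)) + Polynomial.X) := by
  rw [jacobiPoly, jacobiPoly, prod_range_succ, mul_right_comm]

/-- Raising `b` is the first Pascal rule for the `q²`-binomial coefficients, raising `a` the
second one. -/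
theorem coeff_jacobiPoly (a b m : ℕ) :
    (jacobiPoly q a b).coeff m = gaussianBinomial (q ^ 2) (a + b) m * q ^ sqDist b m := by
  induction a generalizing m with
  | zero =>
    induction b generalizing m with
    | zero => cases m <;> simp [jacobiPoly, sqDist, Polynomial.coeff_one]
    | succ b ih =>
      rw [jacobiPoly_succ_right]
      cases m with
      | zero =>
        simp only [mul_add, Polynomial.coeff_add, Polynomial.coeff_mul_C,
          Polynomial.coeff_mul_X_zero, add_zero, ih, gaussianBinomial_zero_right, one_mul,
          ← pow_add, sqDist_succ_zero]
      | succ m =>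
        simp only [mul_add, Polynomial.coeff_add, Polynomial.coeff_mul_C, Polynomial.coeff_mul_X,
          ih, sqDist_succ_succ, ← add_assoc, gaussianBinomial_succ_succ]
        have e : q ^ sqDist b (m + 1) * q ^ (2 * b + 1) = (q ^ 2) ^ (m + 1) * q ^ sqDist b m := by
          rw [← pow_mul, ← pow_add, ← pow_add, sqDist_succ_right_add, add_comm]
        linear_combination gaussianBinomial (q ^ 2) (0 + b) (m + 1) * e
  | succ a ih =>
    rw [jacobiPoly_succ_left, add_right_comm]
    cases m with
    | zero => simp [mul_add, ih]
    | succ m =>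
      simp only [mul_add, mul_one, Polynomial.coeff_add, ← mul_assoc, Polynomial.coeff_mul_X,
        Polynomial.coeff_mul_C, ih]
      rcases le_or_gt m (a + b) with hm | hm
      · obtain ⟨d, hd⟩ := Nat.exists_eq_add_of_le hm
        have e : q ^ sqDist b m * q ^ (2 * a + 1) = (q ^ 2) ^ d * q ^ sqDist b (m + 1) := by
          rw [← pow_mul, ← pow_add, ← pow_add, sqDist_add_of_add_eq hd.symm, add_comm]
        rw [gaussianBinomial_succ_succ' _ hd.symm]
        linear_combination gaussianBinomial (q ^ 2) (a + b) m * e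
      · simp [gaussianBinomial_eq_zero_of_lt _ hm,
          gaussianBinomial_eq_zero_of_lt _ (Nat.lt_succ_of_lt hm),
          gaussianBinomial_eq_zero_of_lt _ (Nat.succ_lt_succ hm)]

theorem neg_one_pow_mul_prod_sq_eq_sum (N : ℕ) :
    (-1) ^ N * (∏ j ∈ range N, (1 - q ^ (2 * j + 1))) ^ 2 =
      ∑ m ∈ range (2 * N + 1), (-1) ^ m * gaussianBinomial (q ^ 2) (2 * N) m * q ^ sqDist N m := by
  have hdeg : (jacobiPoly q N N).natDegree < 2 * N + 1 :=
    Nat.lt_succ_of_le <| Polynomial.natDegree_le_iff_coeff_eq_zero.mpr fun m hm => by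
      rw [coeff_jacobiPoly, gaussianBinomial_eq_zero_of_lt _ (by omega), zero_mul]
  calc (-1) ^ N * (∏ j ∈ range N, (1 - q ^ (2 * j + 1))) ^ 2
      = (jacobiPoly q N N).eval (-1) := by
        simp only [jacobiPoly, Polynomial.eval_mul, Polynomial.eval_prod, Polynomial.eval_add,
          Polynomial.eval_C, Polynomial.eval_X, Polynomial.eval_one]
        have hneg (j : ℕ) : q ^ (2 * j + 1) + -1 = -(1 - q ^ (2 * j + 1)) := by ring
        simp only [hneg, prod_neg, card_range, mul_neg_one, ← sub_eq_add_neg]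
        ring
    _ = _ := by
        rw [Polynomial.eval_eq_sum_range' hdeg]
        refine sum_congr rfl fun m _ => ?_
        rw [coeff_jacobiPoly, ← two_mul]
        ring

end JacobiTripleProduct

section Gauss

theorem prod_range_two_mul_one_sub_pow {R : Type*} [CommRing R] (x : R) (N : ℕ) :
    ∏ j ∈ range (2 * N), (1 - x ^ (j + 1)) =
      (∏ j ∈ range N, (1 - x ^ (2 * j + 1))) * qPochhammer (x ^ 2) N := by
  induction N with
  | zero => simp [qPochhammer]
  | succ N ih =>
    rw [show 2 * (N + 1) = 2 * N + 1 + 1 by ring, prod_range_succ, prod_range_succ, ih,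
      prod_range_succ, qPochhammer_succ]
    ring

theorem sum_range_two_mul_add_one {M : Type*} [AddCommMonoid M] (g : ℕ → M) (N : ℕ) :
    ∑ m ∈ range (2 * N + 1), g m =
      g N + ∑ k ∈ range N, (g (N - (k + 1)) + g (N + (k + 1))) := by
  rw [show 2 * N + 1 = (N + 1) + N by ring, sum_range_add, sum_range_succ, ← sum_range_reflect,
    sum_add_distrib]
  simp only [Nat.sub_sub, add_assoc, add_comm 1]
  abel

theorem neg_one_pow_sub {R : Type*} [Ring R] {a b : ℕ} (h : b ≤ a) :
    (-1 : R) ^ (a - b) = (-1) ^ a * (-1) ^ b := by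
  obtain ⟨c, rfl⟩ := Nat.exists_eq_add_of_le h
  rw [Nat.add_sub_cancel_left, ← pow_add, show b + c + b = c + 2 * b by ring, pow_add,
    pow_mul, neg_one_sq, one_pow, mul_one]

theorem neg_one_pow_sq_eq_neg_one_pow (k : ℕ) : (-1 : ℤ) ^ (k ^ 2) = (-1) ^ k := by
  rw [neg_one_pow_eq_pow_mod_two, Nat.pow_mod, neg_one_pow_eq_pow_mod_two (n := k)]
  rcases Nat.mod_two_eq_zero_or_one k with h | h <;> rw [h]

noncomputable def phiNegTrunc (N : ℕ) : ℤ⟦X⟧ :=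
  1 + ∑ k ∈ range N, C (2 * (-1) ^ (k + 1)) * X ^ ((k + 1) ^ 2)

theorem sum_neg_one_pow_mul_X_pow_sqDist (N : ℕ) :
    ∑ m ∈ range (2 * N + 1), (-1 : ℤ⟦X⟧) ^ m * X ^ sqDist N m = (-1) ^ N * phiNegTrunc N := by
  rw [phiNegTrunc, sum_range_two_mul_add_one, sqDist_self, pow_zero, mul_one, mul_add, mul_one,
    mul_sum]
  refine congrArg _ (sum_congr rfl fun k hk => ?_)
  rw [sqDist_sub (by simp at hk; omega), sqDist_add, neg_one_pow_sub (by simp at hk; omega)]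
  simp only [map_mul, map_pow, map_neg, map_one, map_ofNat]
  ring

theorem modXPow_phiNeg {n N : ℕ} (h : n ≤ N + 1) :
    modXPow n phiNeg = modXPow n (phiNegTrunc N) := by
  refine modXPow_eq_iff.mpr fun j hj => ?_
  simp only [phiNeg, phiNegTrunc, coeff_mk, map_add, coeff_one, map_sum, coeff_C_mul, coeff_X_pow,
    mul_ite, mul_one, mul_zero]
  by_cases hj0 : j = 0
  · subst hj0
    simpa using sum_eq_zero fun k _ => if_neg (pow_pos k.succ_pos 2).ne
  by_cases hsq : ∃ k, 0 < k ∧ j = k ^ 2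
  · obtain ⟨k, hk, rfl⟩ := hsq
    obtain ⟨k, rfl⟩ := Nat.exists_eq_add_of_le' hk
    have hkN : k < N := by nlinarith
    simp [hkN, neg_one_pow_sq_eq_neg_one_pow]
  · rw [if_neg hj0, if_neg hsq, if_neg hj0, zero_add, eq_comm]
    exact sum_eq_zero fun k _ => if_neg fun hk => hsq ⟨k + 1, k.succ_pos, hk⟩

theorem modXPow_fr {r n M : ℕ} (hr : 1 ≤ r) (h : n ≤ M) :
    modXPow n (fr r) = modXPow n (∏ j ∈ range M, (1 - X ^ (r * (j + 1)))) :=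
  modXPow_seriesProd (fun _ => modXPow_one_sub_X_pow (Nat.le_mul_of_pos_left _ hr)) h

theorem modXPow_qPochhammer_X_sq {n k : ℕ} (h : n ≤ k) :
    modXPow n (qPochhammer (X ^ 2 : ℤ⟦X⟧) k) = modXPow n (fr 2) := by
  simp only [modXPow_fr one_le_two h, qPochhammer, ← pow_mul]

theorem isUnit_fr_two : IsUnit (fr 2) := by
  rw [isUnit_iff_constantCoeff, ← coeff_zero_eq_constantCoeff_apply, fr, seriesProd, coeff_mk]
  simp

theorem modXPow_gaussianBinomial_mul_fr_two {n k l m : ℕ} (hk : n ≤ k) (hl : n ≤ l)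
    (h : k + l = m) : modXPow n (gaussianBinomial (X ^ 2) m k) * modXPow n (fr 2) = 1 := by
  have hprod := congrArg (modXPow n)
    (gaussianBinomial_mul_qPochhammer_mul_qPochhammer (X ^ 2 : ℤ⟦X⟧) h)
  rw [map_mul, map_mul, modXPow_qPochhammer_X_sq hk, modXPow_qPochhammer_X_sq hl,
    modXPow_qPochhammer_X_sq (by omega)] at hprod
  exact (isUnit_fr_two.map (modXPow n)).mul_right_cancel (by rw [one_mul]; exact hprod)

theorem phiNeg_mul_fr_two : phiNeg * fr 2 = fr 1 ^ 2 := by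
  refine ext_modXPow fun n => ?_
  obtain ⟨N, hN⟩ : ∃ N, N = 2 * n := ⟨_, rfl⟩
  have hfr1 : modXPow n (fr 1) =
      modXPow n (∏ j ∈ range N, (1 - X ^ (2 * j + 1))) * modXPow n (fr 2) := by
    rw [modXPow_fr le_rfl (show n ≤ 2 * N by omega),
      ← modXPow_qPochhammer_X_sq (show n ≤ N by omega), ← map_mul,
      ← prod_range_two_mul_one_sub_pow]
    simp only [one_mul]
  -- A term that survives modulo `X ^ n` has `|m - N| ≤ (m - N)² < n`, so `m, 2N - m ≥ n`.
  have hterm : ∀ m ∈ range (2 * N + 1),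
      modXPow n ((-1) ^ m * gaussianBinomial (X ^ 2) (2 * N) m * X ^ sqDist N m) *
          modXPow n (fr 2) ^ 2 = modXPow n ((-1) ^ m * X ^ sqDist N m) * modXPow n (fr 2) := by
    intro m hm
    simp only [map_mul]
    rcases le_or_gt n (sqDist N m) with hn | hn
    · simp [modXPow_X_pow hn]
    · have : ((m : ℤ) - N).natAbs < n := (Nat.le_self_pow two_ne_zero _).trans_lt hn
      have hG := modXPow_gaussianBinomial_mul_fr_two (n := n) (k := m) (l := 2 * N - m)
        (m := 2 * N) (by omega) (by omega) (by simp at hm; omega)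
      linear_combination
        modXPow n ((-1) ^ m) * modXPow n (X ^ sqDist N m) * modXPow n (fr 2) * hG
  have hsign : ((-1 : ℤ⟦X⟧) ^ N) ^ 2 = 1 := by rw [← pow_mul, pow_mul', neg_one_sq, one_pow]
  have hsign' : modXPow n (-1 : ℤ⟦X⟧) ^ N * modXPow n (-1 : ℤ⟦X⟧) ^ N = 1 := by
    rw [← map_pow, ← map_mul, ← sq, hsign, map_one]
  calc modXPow n (phiNeg * fr 2)
      = modXPow n ((-1) ^ N * ∑ m ∈ range (2 * N + 1), (-1) ^ m * X ^ sqDist N m) *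
          modXPow n (fr 2) := by
        rw [sum_neg_one_pow_mul_X_pow_sqDist, ← mul_assoc, ← sq, hsign, one_mul, map_mul,
          modXPow_phiNeg (N := N) (by omega)]
    _ = modXPow n ((-1) ^ N) * ∑ m ∈ range (2 * N + 1),
          modXPow n ((-1) ^ m * gaussianBinomial (X ^ 2) (2 * N) m * X ^ sqDist N m) *
            modXPow n (fr 2) ^ 2 := by
        rw [sum_congr rfl hterm, map_mul, map_sum, mul_assoc, sum_mul]
    _ = modXPow n (fr 1 ^ 2) := by
        rw [← sum_mul, ← map_sum, ← neg_one_pow_mul_prod_sq_eq_sum]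
        simp only [map_mul, map_pow, hfr1]
        linear_combination
          (modXPow n (∏ j ∈ range N, (1 - X ^ (2 * j + 1))) * modXPow n (fr 2)) ^ 2 * hsign'

end Gauss

section OverGF

theorem modXPow_invOfUnit_one_sub_X_pow {n k : ℕ} (h : n ≤ k + 1) :
    modXPow n (invOfUnit (1 - X ^ (k + 1) : ℤ⟦X⟧) 1) = 1 := by
  have hinv := congrArg (modXPow n) (invOfUnit_mul (1 - X ^ (k + 1) : ℤ⟦X⟧) 1 (by simp))
  rwa [map_mul, modXPow_one_sub_X_pow h, mul_one, map_one] at hinv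

theorem overGF_mul_fr_one_pow (t : ℕ) : overGF t * fr 1 ^ (2 * t) = fr 2 ^ t := by
  refine ext_modXPow fun n => ?_
  have hf (k : ℕ) : modXPow (k + 1) ((1 - X ^ (2 * (k + 1)) : ℤ⟦X⟧) ^ t *
      invOfUnit (1 - X ^ (k + 1)) 1 ^ (2 * t)) = 1 := by
    rw [map_mul, map_pow, map_pow, modXPow_one_sub_X_pow (by omega),
      modXPow_invOfUnit_one_sub_X_pow le_rfl, one_pow, one_pow, one_mul]
  have hinv : ∏ k ∈ range n,
      (invOfUnit (1 - X ^ (k + 1) : ℤ⟦X⟧) 1 * (1 - X ^ (1 * (k + 1)))) = 1 :=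
    prod_eq_one fun k _ => by rw [one_mul]; exact invOfUnit_mul _ _ (by simp)
  rw [map_mul, map_pow, map_pow, overGF, modXPow_seriesProd hf le_rfl, modXPow_fr le_rfl le_rfl,
    modXPow_fr one_le_two le_rfl, ← map_pow, ← map_mul, ← map_pow, prod_mul_distrib, prod_pow,
    prod_pow, mul_assoc, ← mul_pow, ← prod_mul_distrib, hinv, one_pow, mul_one]

theorem overGF_mul_phiNeg_pow (t : ℕ) : overGF t * phiNeg ^ t = 1 := by
  refine (isUnit_fr_two.pow t).mul_right_cancel ?_
  rw [one_mul, mul_assoc, ← mul_pow, phiNeg_mul_fr_two, ← pow_mul, overGF_mul_fr_one_pow]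

end OverGF

section ModEight

theorem one_add_two_mul_pow_of_eight_eq_zero {R : Type*} [CommRing R] (h8 : (8 : R) = 0)
    (b : R) (s : ℕ) : (1 + 2 * b) ^ s = 1 + (2 * s) • b + (4 * s.choose 2) • b ^ 2 := by
  induction s with
  | zero => simp
  | succ s ih =>
    rw [pow_succ, ih, Nat.choose_succ_succ, Nat.choose_one_right]
    simp only [nsmul_eq_mul]
    push_cast
    linear_combination (s.choose 2 * b ^ 3 : R) * h8

noncomputable def signedSquares : ℤ⟦X⟧ :=
  mk fun n => if ∃ k, 0 < k ∧ n = k ^ 2 then (-1) ^ n else 0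

theorem phiNeg_eq_one_add_two_mul_signedSquares : phiNeg = 1 + 2 * signedSquares := by
  ext n
  simp only [phiNeg, signedSquares, coeff_mk, map_add, two_mul, coeff_one]
  rcases eq_or_ne n 0 with rfl | hn
  · simpa using fun k hk => (pow_pos hk 2).ne
  · simp only [if_neg hn, zero_add]
    split_ifs <;> ring

theorem sq_add_sq_ne_eight_mul_add_six (i j n : ℕ) : i ^ 2 + j ^ 2 ≠ 8 * n + 6 := by
  intro h
  have h8 := congrArg (Nat.cast : ℕ → ZMod 8) h
  push_cast at h8
  rw [show (8 : ZMod 8) = 0 from rfl, zero_mul, zero_add] at h8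
  exact (by decide : ∀ x y : ZMod 8, x ^ 2 + y ^ 2 ≠ 6) _ _ h8

theorem coeff_signedSquares_eight_mul_add_six (n : ℕ) :
    coeff (8 * n + 6) signedSquares = 0 := by
  simp only [signedSquares, coeff_mk]
  exact if_neg fun ⟨k, _, hk⟩ => sq_add_sq_ne_eight_mul_add_six k 0 n (by simpa using hk.symm)

theorem coeff_signedSquares_sq_eight_mul_add_six (n : ℕ) :
    coeff (8 * n + 6) (signedSquares ^ 2) = 0 := by
  rw [sq, coeff_mul]
  refine sum_eq_zero fun ⟨i, j⟩ hij => ?_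
  simp only [HasAntidiagonal.mem_antidiagonal] at hij
  simp only [signedSquares, coeff_mk]
  split_ifs with hi hj <;> try simp
  obtain ⟨k, -, rfl⟩ := hi
  obtain ⟨l, -, rfl⟩ := hj
  exact absurd hij (sq_add_sq_ne_eight_mul_add_six k l n)

theorem eight_eq_zero_powerSeries_zmod : (8 : (ZMod 8)⟦X⟧) = 0 := by
  have h := map_natCast (C (R := ZMod 8)) 8
  rw [ZMod.natCast_self, map_zero] at h
  exact_mod_cast h.symm

theorem map_overGF_eq (t : ℕ) :
    map (Int.castRingHom (ZMod 8)) (overGF t) =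
      (1 + 2 * map (Int.castRingHom (ZMod 8)) signedSquares) ^ (3 * t) := by
  set ρ := map (Int.castRingHom (ZMod 8))
  have hphi : ρ phiNeg = 1 + 2 * ρ signedSquares := by
    rw [phiNeg_eq_one_add_two_mul_signedSquares, map_add, map_mul, map_one, map_ofNat]
  have hphi4 : ρ phiNeg ^ 4 = 1 := by
    rw [hphi, one_add_two_mul_pow_of_eight_eq_zero eight_eq_zero_powerSeries_zmod,
      show Nat.choose 4 2 = 6 from rfl]
    simp only [nsmul_eq_mul]
    push_cast
    linear_combination (ρ signedSquares + 3 * ρ signedSquares ^ 2) * eight_eq_zero_powerSeries_zmod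
  have h := congrArg ρ (overGF_mul_phiNeg_pow t)
  rw [map_mul, map_pow, map_one] at h
  calc ρ (overGF t) = ρ (overGF t) * (ρ phiNeg ^ 4) ^ t := by rw [hphi4, one_pow, mul_one]
    _ = ρ (overGF t) * ρ phiNeg ^ t * ρ phiNeg ^ (3 * t) := by ring
    _ = (1 + 2 * ρ signedSquares) ^ (3 * t) := by rw [h, one_mul, hphi]

end ModEight

theorem pbar_eight_n_add_6_general (t : ℕ) (n : ℕ) :
    (8 : ℤ) ∣ pbar t (8 * n + 6) := by
  refine (ZMod.intCast_zmod_eq_zero_iff_dvd _ 8).mp ?_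
  rw [pbar, ← eq_intCast (Int.castRingHom (ZMod 8)), ← coeff_map, map_overGF_eq,
    one_add_two_mul_pow_of_eight_eq_zero eight_eq_zero_powerSeries_zmod, map_add, map_add,
    map_nsmul, map_nsmul, coeff_one, if_neg (by omega), coeff_map,
    coeff_signedSquares_eight_mul_add_six, ← map_pow, coeff_map,
    coeff_signedSquares_sq_eight_mul_add_six]
  simp

/-- For all `n ≥ 0` and all odd `t ≥ 1`, `p̄_{-t}(8n+6) ≡ 0 (mod 8)`. -/
theorem pbar_eight_n_add_6 (t : ℕ) (ht1 : 1 ≤ t) (ht : Odd t) (n : ℕ) :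
    (8 : ℤ) ∣ pbar t (8 * n + 6) :=
  pbar_eight_n_add_6_general t n
end

section
/- For every integer t ≥ 1, the following identity of formal power series over ℤ holds: ∑_{n≥0} p̄_{-t}(n) q^n = ( ∏_{i≥0} φ(q^{2^i})^{2^i} )^t, where the infinite product converges in the formal power series topology (for each fixed power of q, only finitely many factors contribute). -/
/-!
Write `P = ∏_{k ≥ 1} (1 + q^k) / (1 - q^k)`, so that the overpartition series is `P^t`.
Gauss's identity `φ(-q) P = 1` is the limit `n → ∞` of the finite Jacobi triple product
`∏_{i<n} (1 - q^{2i+1})² = ∑_{|j| ≤ n} (-1)^j q^{j²} [2n choose n+j]_{q²}`, whose two sides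
satisfy the same recursion in `n` by the `q`-Pascal rule. On the other side, pairing the
representations `n = m x² + m y²` having `x + y` even with the representations
`n = 2m u² + 2m v²` via `x = u + v, y = u - v` (the others cancel under `x ↔ y`) gives
`φ(q^m) φ(-q^m) = φ(-q^{2m})²`, which telescopes to
`φ(-q) ∏_{i<N} φ(q^{2^i})^{2^i} = φ(-q^{2^N})^{2^N} ≡ 1 mod q^{2^N}`.
So `P` and `∏_{i ≥ 0} φ(q^{2^i})^{2^i}` are both inverse to `φ(-q)`.
-/

open scoped Classical

open PowerSeries Finset

section XAdic

variable {R : Type*} [CommRing R]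

theorem smodEq_X_pow_iff {a b : R⟦X⟧} {k : ℕ} :
    a ≡ b [SMOD Ideal.span {X ^ k}] ↔ ∀ n < k, coeff n a = coeff n b := by
  simp only [SModEq.sub_mem, Ideal.mem_span_singleton, X_pow_dvd_iff, map_sub, sub_eq_zero]

theorem SModEq.of_X_pow_le {a b : R⟦X⟧} {j k : ℕ} (h : a ≡ b [SMOD Ideal.span {X ^ k}])
    (hjk : j ≤ k) : a ≡ b [SMOD Ideal.span {X ^ j}] :=
  h.mono (Ideal.span_singleton_le_span_singleton.mpr (pow_dvd_pow X hjk))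

theorem SModEq.X_pow_mul {a b : R⟦X⟧} {k : ℕ} (h : a ≡ b [SMOD Ideal.span {X ^ k}])
    (e : ℕ) : X ^ e * a ≡ X ^ e * b [SMOD Ideal.span {X ^ (e + k)}] := by
  rw [SModEq.sub_mem, Ideal.mem_span_singleton] at h ⊢
  rw [← mul_sub, pow_add]
  exact mul_dvd_mul_left _ h

theorem one_sub_X_pow_smodEq_one {e k : ℕ} (hke : k ≤ e) :
    (1 - X ^ e : R⟦X⟧) ≡ 1 [SMOD Ideal.span {X ^ k}] := by
  rw [SModEq.sub_mem, Ideal.mem_span_singleton, sub_sub_cancel_left, dvd_neg]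
  exact pow_dvd_pow X hke

theorem eq_of_forall_smodEq_X_pow {a b : R⟦X⟧} (h : ∀ n, a ≡ b [SMOD Ideal.span {X ^ n}]) :
    a = b :=
  ext fun n => smodEq_X_pow_iff.mp (h (n + 1)) n n.lt_succ_self

theorem prod_range_smodEq_of_le {I : Ideal R} {f : ℕ → R} {N M : ℕ} (hNM : N ≤ M)
    (hf : ∀ k, N ≤ k → f k ≡ 1 [SMOD I]) :
    ∏ k ∈ range M, f k ≡ ∏ k ∈ range N, f k [SMOD I] := by
  rw [← prod_range_mul_prod_Ico f hNM]
  have hIco : ∏ k ∈ Ico N M, f k ≡ ∏ _k ∈ Ico N M, 1 [SMOD I] :=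
    SModEq.prod fun k hk => hf k (mem_Ico.mp hk).1
  simpa using SModEq.rfl.mul hIco

end XAdic

section SeriesProd

variable {f : ℕ → ℤ⟦X⟧}

theorem seriesProd_smodEq_prod (hf : ∀ k, f k ≡ 1 [SMOD Ideal.span {X ^ (k + 1)}]) {n N : ℕ}
    (hnN : n ≤ N) : seriesProd f ≡ ∏ k ∈ range N, f k [SMOD Ideal.span {X ^ n}] := by
  refine smodEq_X_pow_iff.mpr fun a ha => ?_
  have htail :
      ∏ k ∈ range N, f k ≡ ∏ k ∈ range (a + 1), f k [SMOD Ideal.span {X ^ (a + 1)}] :=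
    prod_range_smodEq_of_le (by omega) fun k hk => (hf k).of_X_pow_le (by omega)
  rw [seriesProd, coeff_mk, smodEq_X_pow_iff.mp htail a a.lt_succ_self]

theorem seriesProd_pow (hf : ∀ k, f k ≡ 1 [SMOD Ideal.span {X ^ (k + 1)}]) (t : ℕ) :
    seriesProd (fun k => f k ^ t) = seriesProd f ^ t := by
  refine ext fun n => ?_
  rw [seriesProd, coeff_mk, prod_pow]
  exact smodEq_X_pow_iff.mp (((seriesProd_smodEq_prod hf le_rfl).pow t).symm) n n.lt_succ_self

theorem mul_seriesProd_eq_one (hf : ∀ k, f k ≡ 1 [SMOD Ideal.span {X ^ (k + 1)}])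
    {a : ℤ⟦X⟧} (ha : ∀ n, a * ∏ k ∈ range n, f k ≡ 1 [SMOD Ideal.span {X ^ n}]) :
    a * seriesProd f = 1 :=
  eq_of_forall_smodEq_X_pow fun n =>
    (SModEq.rfl.mul (seriesProd_smodEq_prod hf le_rfl)).trans (ha n)

end SeriesProd

section GaussianBinomial

noncomputable def qPochSq (n : ℕ) : ℤ⟦X⟧ := ∏ i ∈ range n, (1 - X ^ (2 * (i + 1)))

theorem qPochSq_zero : qPochSq 0 = 1 := prod_range_zero _

theorem qPochSq_succ (n : ℕ) : qPochSq (n + 1) = qPochSq n * (1 - X ^ (2 * n + 2)) :=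
  prod_range_succ _ n

theorem isUnit_qPochSq (n : ℕ) : IsUnit (qPochSq n) := by
  refine isUnit_iff_constantCoeff.mpr ?_
  simp [qPochSq, map_prod]

theorem qPochSq_smodEq_of_le {b c : ℕ} (hbc : b ≤ c) :
    qPochSq c ≡ qPochSq b [SMOD Ideal.span {X ^ (2 * b + 2)}] :=
  prod_range_smodEq_of_le hbc fun k hk => one_sub_X_pow_smodEq_one (by omega)

/-- The Gaussian binomial coefficient `[r + t choose r]` in the variable `q²`. -/
noncomputable def qBinom (r t : ℕ) : ℤ⟦X⟧ :=
  qPochSq (r + t) * Ring.inverse (qPochSq r * qPochSq t)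

theorem qBinom_mul (r t : ℕ) : qBinom r t * (qPochSq r * qPochSq t) = qPochSq (r + t) := by
  rw [qBinom, mul_assoc,
    Ring.inverse_mul_cancel _ ((isUnit_qPochSq r).mul (isUnit_qPochSq t)), mul_one]

theorem qBinom_eq_iff {r t : ℕ} {b : ℤ⟦X⟧} :
    qBinom r t = b ↔ b * (qPochSq r * qPochSq t) = qPochSq (r + t) := by
  rw [← ((isUnit_qPochSq r).mul (isUnit_qPochSq t)).mul_left_inj, qBinom_mul, eq_comm]

theorem qBinom_comm (r t : ℕ) : qBinom r t = qBinom t r := by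
  rw [qBinom_eq_iff, mul_comm (qPochSq r), add_comm, qBinom_mul]

theorem qBinom_zero_right (r : ℕ) : qBinom r 0 = 1 := by
  rw [qBinom_eq_iff, qPochSq_zero, one_mul, mul_one, add_zero]

theorem qBinom_succ_succ (r t : ℕ) :
    qBinom (r + 1) (t + 1) = qBinom (r + 1) t + X ^ (2 * t + 2) * qBinom r (t + 1) := by
  have h₁ := qBinom_mul (r + 1) t
  have h₂ := qBinom_mul r (t + 1)
  rw [qPochSq_succ r, show r + 1 + t = r + t + 1 by omega] at h₁
  rw [qPochSq_succ t, show r + (t + 1) = r + t + 1 by omega] at h₂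
  rw [qBinom_eq_iff, qPochSq_succ r, qPochSq_succ t, show r + 1 + (t + 1) = r + t + 1 + 1 by omega,
    qPochSq_succ (r + t + 1)]
  linear_combination (1 - X ^ (2 * t + 2)) * h₁ + X ^ (2 * t + 2) * (1 - X ^ (2 * r + 2)) * h₂

/-- Extended by zero, `qBinom` obeys the `q`-Pascal rule at every `(r, t)` with `r + t > 0`. -/
noncomputable def qBinomZ (r t : ℤ) : ℤ⟦X⟧ :=
  if 0 ≤ r ∧ 0 ≤ t then qBinom r.toNat t.toNat else 0

theorem qBinomZ_natCast (r t : ℕ) : qBinomZ r t = qBinom r t := by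
  simp [qBinomZ]

theorem qBinomZ_of_neg {r t : ℤ} (h : r < 0 ∨ t < 0) : qBinomZ r t = 0 :=
  if_neg (by omega)

theorem qBinomZ_comm (r t : ℤ) : qBinomZ r t = qBinomZ t r := by
  simp only [qBinomZ, and_comm, qBinom_comm]

theorem qBinomZ_zero_right {r : ℤ} (hr : 0 ≤ r) : qBinomZ r 0 = 1 := by
  lift r to ℕ using hr
  rw [← Nat.cast_zero, qBinomZ_natCast, qBinom_zero_right]

theorem qBinomZ_eq_add_right {r t : ℤ} (h : 0 < r + t) :
    qBinomZ r t = qBinomZ r (t - 1) + X ^ (2 * t.toNat) * qBinomZ (r - 1) t := by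
  rcases lt_or_ge r 0 with hr | hr
  · simp [qBinomZ_of_neg, hr, show r - 1 < 0 by omega]
  rcases lt_or_ge t 0 with ht | ht
  · simp [qBinomZ_of_neg, ht, show t - 1 < 0 by omega]
  rcases ht.eq_or_lt with rfl | ht
  · rw [qBinomZ_zero_right hr, qBinomZ_of_neg (by omega), qBinomZ_zero_right (by omega)]
    simp
  rcases hr.eq_or_lt with rfl | hr
  · rw [qBinomZ_comm 0, qBinomZ_zero_right ht.le, qBinomZ_comm 0, qBinomZ_zero_right (by omega),
      qBinomZ_of_neg (by omega)]
    ring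
  obtain ⟨a, rfl⟩ : ∃ a : ℕ, r = a + 1 := ⟨(r - 1).toNat, by omega⟩
  obtain ⟨b, rfl⟩ : ∃ b : ℕ, t = b + 1 := ⟨(t - 1).toNat, by omega⟩
  rw [add_sub_cancel_right, add_sub_cancel_right, ← Nat.cast_add_one, ← Nat.cast_add_one,
    qBinomZ_natCast, qBinomZ_natCast, qBinomZ_natCast, Int.toNat_natCast,
    qBinom_succ_succ]
  ring

theorem qBinomZ_eq_add_left {r t : ℤ} (h : 0 < r + t) :
    qBinomZ r t = qBinomZ (r - 1) t + X ^ (2 * r.toNat) * qBinomZ r (t - 1) := by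
  rw [qBinomZ_comm, qBinomZ_eq_add_right (by omega), qBinomZ_comm, qBinomZ_comm (t - 1)]

theorem qBinomZ_central_succ (n : ℕ) (j : ℤ) :
    qBinomZ (n + 1 + j) (n + 1 - j) =
      (1 + X ^ (2 * (2 * n + 1))) * qBinomZ (n + j) (n - j)
        + X ^ (2 * (n - (j - 1)).toNat) * qBinomZ (n + (j - 1)) (n - (j - 1))
        + X ^ (2 * (n + (j + 1)).toNat) * qBinomZ (n + (j + 1)) (n - (j + 1)) := by
  have h₁ : qBinomZ (n + 1 + j) (n + 1 - j) = qBinomZ (n + j) (n - (j - 1))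
      + X ^ (2 * (n + (j + 1)).toNat) * qBinomZ (n + (j + 1)) (n - j) := by
    rw [qBinomZ_eq_add_left (by omega)]; ring_nf
  have h₂ : qBinomZ (n + j) (n - (j - 1)) = qBinomZ (n + j) (n - j)
      + X ^ (2 * (n - (j - 1)).toNat) * qBinomZ (n + (j - 1)) (n - (j - 1)) := by
    rw [qBinomZ_eq_add_right (by omega)]; ring_nf
  have h₃ : qBinomZ (n + (j + 1)) (n - j) = qBinomZ (n + (j + 1)) (n - (j + 1))
      + X ^ (2 * (n - j).toNat) * qBinomZ (n + j) (n - j) := by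
    rw [qBinomZ_eq_add_right (by omega)]; ring_nf
  have hmid : X ^ (2 * (n + (j + 1)).toNat) * X ^ (2 * (n - j).toNat) * qBinomZ (n + j) (n - j)
      = X ^ (2 * (2 * n + 1)) * qBinomZ (n + j) (n - j) := by
    by_cases hj : (n : ℤ) + j < 0 ∨ (n : ℤ) - j < 0
    · simp [qBinomZ_of_neg hj]
    rw [← pow_add]
    congr 2
    omega
  linear_combination h₁ + h₂ + X ^ (2 * (n + (j + 1)).toNat) * h₃ + hmid

end GaussianBinomial

section JacobiTripleProduct

theorem sum_Icc_shift {M : Type*} [AddCommMonoid M] (f : ℤ → M) (a b c : ℤ) :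
    ∑ j ∈ Icc a b, f j = ∑ i ∈ Icc (a - c) (b - c), f (i + c) := by
  have h := sum_map (Icc (a - c) (b - c)) (addRightEmbedding c) f
  rwa [map_add_right_Icc, sub_add_cancel, sub_add_cancel] at h

noncomputable def signedSq (j : ℤ) : ℤ⟦X⟧ := C (j.negOnePow : ℤ) * X ^ (j.natAbs ^ 2)

noncomputable def qBinomThetaSum (n : ℕ) : ℤ⟦X⟧ :=
  ∑ j ∈ Icc (-(n : ℤ)) n, signedSq j * qBinomZ (n + j) (n - j)

theorem sum_signedSq_mul_qBinomZ_of_subset (n : ℕ) {s : Finset ℤ}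
    (hs : Icc (-(n : ℤ)) n ⊆ s) :
    ∑ j ∈ s, signedSq j * qBinomZ (n + j) (n - j) = qBinomThetaSum n :=
  (sum_subset hs fun j _ hj => by
    rw [qBinomZ_of_neg (by simp only [mem_Icc] at hj; omega), mul_zero]).symm

theorem signedSq_shift_mul_qBinomZ {n : ℕ} {i j : ℤ} {e : ℕ} (hij : j = i + 1 ∨ j = i - 1)
    (he : -(n : ℤ) ≤ i → i ≤ n → (j.natAbs ^ 2 + e : ℤ) = i.natAbs ^ 2 + (2 * n + 1)) :
    signedSq j * X ^ e * qBinomZ (n + i) (n - i) =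
      -X ^ (2 * n + 1) * signedSq i * qBinomZ (n + i) (n - i) := by
  by_cases hi : (n : ℤ) + i < 0 ∨ (n : ℤ) - i < 0
  · simp [qBinomZ_of_neg hi]
  have hsgn : (j.negOnePow : ℤ) = -i.negOnePow := by
    rcases hij with rfl | rfl
    · rw [Int.negOnePow_succ, Units.val_neg]
    · rw [Int.negOnePow_sub, Int.negOnePow_one, mul_neg_one, Units.val_neg]
  have hexp : j.natAbs ^ 2 + e = i.natAbs ^ 2 + (2 * n + 1) := by
    exact_mod_cast he (by omega) (by omega)
  have hX : (X : ℤ⟦X⟧) ^ (j.natAbs ^ 2) * X ^ e = X ^ (i.natAbs ^ 2) * X ^ (2 * n + 1) := by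
    rw [← pow_add, hexp, pow_add]
  rw [signedSq, signedSq, hsgn, map_neg]
  linear_combination (-C (i.negOnePow : ℤ) * qBinomZ (n + i) (n - i)) * hX

theorem qBinomThetaSum_succ (n : ℕ) :
    qBinomThetaSum (n + 1) = (1 - X ^ (2 * n + 1)) ^ 2 * qBinomThetaSum n := by
  have hIcc : Icc (-(n : ℤ)) n ⊆ Icc (-(n + 1 : ℤ)) (n + 1) :=
    Icc_subset_Icc (by omega) (by omega)
  have hlower : ∑ j ∈ Icc (-(n + 1 : ℤ)) (n + 1),
      signedSq j * X ^ (2 * (n - (j - 1)).toNat) * qBinomZ (n + (j - 1)) (n - (j - 1))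
      = -X ^ (2 * n + 1) * qBinomThetaSum n := by
    rw [sum_Icc_shift _ _ _ 1]
    simp only [add_sub_cancel_right]
    rw [sum_congr rfl fun i _ => signedSq_shift_mul_qBinomZ (n := n) (i := i)
      (Or.inl rfl) fun _ hi => by
      push_cast [sq_abs, Int.toNat_of_nonneg (show (0 : ℤ) ≤ n - i by omega)]; ring]
    simp only [mul_assoc, ← mul_sum]
    rw [sum_signedSq_mul_qBinomZ_of_subset n (Icc_subset_Icc (by omega) (by omega))]
  have hupper : ∑ j ∈ Icc (-(n + 1 : ℤ)) (n + 1),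
      signedSq j * X ^ (2 * (n + (j + 1)).toNat) * qBinomZ (n + (j + 1)) (n - (j + 1))
      = -X ^ (2 * n + 1) * qBinomThetaSum n := by
    rw [sum_Icc_shift _ _ _ (-1)]
    simp only [neg_add_cancel_right]
    rw [sum_congr rfl fun i _ => signedSq_shift_mul_qBinomZ (n := n) (i := i)
      (Or.inr (sub_eq_add_neg i 1).symm) fun hi _ => by
      push_cast [sq_abs, Int.toNat_of_nonneg (show (0 : ℤ) ≤ n + i by omega)]; ring]
    simp only [mul_assoc, ← mul_sum]
    rw [sum_signedSq_mul_qBinomZ_of_subset n (Icc_subset_Icc (by omega) (by omega))]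
  calc qBinomThetaSum (n + 1)
      = ∑ j ∈ Icc (-(n + 1 : ℤ)) (n + 1), ((1 + X ^ (2 * (2 * n + 1))) *
          (signedSq j * qBinomZ (n + j) (n - j))
          + signedSq j * X ^ (2 * (n - (j - 1)).toNat) * qBinomZ (n + (j - 1)) (n - (j - 1))
          + signedSq j * X ^ (2 * (n + (j + 1)).toNat) * qBinomZ (n + (j + 1)) (n - (j + 1))) := by
        rw [qBinomThetaSum]
        push_cast
        refine sum_congr rfl fun j _ => ?_
        rw [qBinomZ_central_succ]
        ring
    _ = (1 - X ^ (2 * n + 1)) ^ 2 * qBinomThetaSum n := by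
        rw [sum_add_distrib, sum_add_distrib, ← mul_sum,
          sum_signedSq_mul_qBinomZ_of_subset n hIcc, hlower, hupper]
        ring

theorem prod_one_sub_X_odd_sq (n : ℕ) :
    (∏ i ∈ range n, (1 - X ^ (2 * i + 1) : ℤ⟦X⟧)) ^ 2 = qBinomThetaSum n := by
  induction n with
  | zero => simp [qBinomThetaSum, signedSq, qBinomZ_zero_right]
  | succ n ih => rw [prod_range_succ, mul_pow, ih, qBinomThetaSum_succ, mul_comm]

end JacobiTripleProduct

section SumsOfTwoSquares

theorem self_le_mul_sq {m : ℕ} (hm : 0 < m) (k : ℕ) : k ≤ m * k ^ 2 :=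
  (Nat.le_self_pow two_ne_zero k).trans (Nat.le_mul_of_pos_left _ hm)

noncomputable def sqAddSqReps (c n : ℕ) : Finset (ℤ × ℤ) :=
  (Icc (-(n : ℤ)) n ×ˢ Icc (-(n : ℤ)) n).filter
    fun z => n = c * z.1.natAbs ^ 2 + c * z.2.natAbs ^ 2

variable {m n : ℕ}

theorem mem_sqAddSqReps (hm : 0 < m) {z : ℤ × ℤ} :
    z ∈ sqAddSqReps m n ↔ (n : ℤ) = m * (z.1 ^ 2 + z.2 ^ 2) := by
  have h₁ := self_le_mul_sq hm z.1.natAbs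
  have h₂ := self_le_mul_sq hm z.2.natAbs
  have hcast :
      (n : ℤ) = m * (z.1 ^ 2 + z.2 ^ 2) ↔ n = m * z.1.natAbs ^ 2 + m * z.2.natAbs ^ 2 := by
    rw [← Int.natAbs_pow_two z.1, ← Int.natAbs_pow_two z.2]
    norm_cast
    ring_nf
  simp only [sqAddSqReps, mem_filter, mem_product, mem_Icc, hcast]
  omega

theorem sum_negOnePow_snd_of_odd (hm : 0 < m) :
    ∑ z ∈ (sqAddSqReps m n).filter (fun z => ¬Even (z.1 + z.2)),
      (z.2.negOnePow : ℤ) = 0 := by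
  set S := (sqAddSqReps m n).filter (fun z => ¬Even (z.1 + z.2))
  have hswap : ∑ z ∈ S, (z.2.negOnePow : ℤ) = ∑ z ∈ S, (z.1.negOnePow : ℤ) := by
    refine sum_nbij' Prod.swap Prod.swap (fun z hz => ?_) (fun z hz => ?_)
      (fun z _ => rfl) (fun z _ => rfl) (fun z _ => rfl)
    all_goals
      simp only [S, mem_filter, mem_sqAddSqReps hm, Prod.fst_swap, Prod.snd_swap] at hz ⊢
      exact ⟨by linear_combination hz.1, by rw [add_comm]; exact hz.2⟩
  have hanti : ∀ z ∈ S, (z.1.negOnePow : ℤ) = -z.2.negOnePow := fun z hz => by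
    have h := Int.negOnePow_sub (z.1 + z.2) z.2
    rw [add_sub_cancel_right, Int.negOnePow_odd _ (Int.not_even_iff_odd.mp (mem_filter.mp hz).2),
      neg_one_mul] at h
    rw [h, Units.val_neg]
  rw [sum_congr rfl hanti, sum_neg_distrib] at hswap
  linarith

theorem sum_negOnePow_snd_of_even (hm : 0 < m) :
    ∑ z ∈ (sqAddSqReps m n).filter (fun z => Even (z.1 + z.2)), (z.2.negOnePow : ℤ) =
      ∑ z ∈ sqAddSqReps (2 * m) n, (z.1.negOnePow : ℤ) * z.2.negOnePow := by
  have hm₂ : 0 < 2 * m := by omega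
  refine sum_nbij' (fun z => ((z.1 + z.2) / 2, (z.1 - z.2) / 2)) (fun z => (z.1 + z.2, z.1 - z.2))
    (fun z hz => ?_) (fun z hz => ?_) (fun z hz => ?_) (fun z _ => ?_) (fun z hz => ?_)
  · simp only [mem_filter, mem_sqAddSqReps hm, mem_sqAddSqReps hm₂] at hz ⊢
    obtain ⟨hn, r, hr⟩ := hz
    rw [show (z.1 + z.2) / 2 = r by omega, show (z.1 - z.2) / 2 = z.1 - r by omega, hn,
      show z.2 = 2 * r - z.1 by omega]
    push_cast
    ring
  · simp only [mem_filter, mem_sqAddSqReps hm, mem_sqAddSqReps hm₂] at hz ⊢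
    exact ⟨by rw [hz]; push_cast; ring, z.1, by ring⟩
  · obtain ⟨r, hr⟩ := (mem_filter.mp hz).2
    ext <;> simp only <;> omega
  · ext <;> simp only <;> omega
  · obtain ⟨r, hr⟩ := (mem_filter.mp hz).2
    rw [← Units.val_mul, ← Int.negOnePow_sub]
    congr 2
    omega

theorem sum_negOnePow_snd_sqAddSqReps (hm : 0 < m) :
    ∑ z ∈ sqAddSqReps m n, (z.2.negOnePow : ℤ) =
      ∑ z ∈ sqAddSqReps (2 * m) n, (z.1.negOnePow : ℤ) * z.2.negOnePow := by
  rw [← sum_filter_add_sum_filter_not _ fun z => Even (z.1 + z.2), sum_negOnePow_snd_of_odd hm,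
    add_zero, sum_negOnePow_snd_of_even hm]

end SumsOfTwoSquares

section Theta

noncomputable def thetaPoly (m n : ℕ) (w : ℤ → ℤ) : ℤ⟦X⟧ :=
  ∑ x ∈ Icc (-(n : ℤ)) n, C (w x) * X ^ (m * x.natAbs ^ 2)

/-- `∑_{x ∈ ℤ} w(x) q^{m x²}`; its coefficient of `q^n` is read off from the terms with
`|x| ≤ n`. -/
noncomputable def thetaSeries (m : ℕ) (w : ℤ → ℤ) : ℤ⟦X⟧ :=
  mk fun n => coeff n (thetaPoly m n w)

variable {m : ℕ} {w : ℤ → ℤ}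

theorem coeff_thetaPoly (n a : ℕ) :
    coeff a (thetaPoly m n w) =
      ∑ x ∈ Icc (-(n : ℤ)) n, if a = m * x.natAbs ^ 2 then w x else 0 := by
  simp only [thetaPoly, map_sum, coeff_C_mul_X_pow]

theorem coeff_thetaPoly_of_le (hm : 0 < m) {a n N : ℕ} (ha : a ≤ n) (hnN : n ≤ N) :
    coeff a (thetaPoly m N w) = coeff a (thetaPoly m n w) := by
  rw [coeff_thetaPoly, coeff_thetaPoly]
  refine (sum_subset (Icc_subset_Icc (by omega) (by omega)) fun x _ hx => if_neg ?_).symm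
  have := self_le_mul_sq hm x.natAbs
  simp only [mem_Icc] at hx
  omega

theorem thetaSeries_smodEq_thetaPoly (hm : 0 < m) (n : ℕ) :
    thetaSeries m w ≡ thetaPoly m n w [SMOD Ideal.span {X ^ (n + 1)}] :=
  smodEq_X_pow_iff.mpr fun a ha => by
    rw [thetaSeries, coeff_mk]
    exact (coeff_thetaPoly_of_le hm le_rfl (by omega)).symm

theorem coeff_thetaSeries_mul_sq (hm : 0 < m) (k : ℕ) :
    coeff (m * k ^ 2) (thetaSeries m w) = ∑ x ∈ {(k : ℤ), -(k : ℤ)}, w x := by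
  rw [thetaSeries, coeff_mk, coeff_thetaPoly, ← sum_filter]
  congr 1
  ext x
  have hk := self_le_mul_sq hm k
  have hsq : m * k ^ 2 = m * x.natAbs ^ 2 ↔ x.natAbs = k := by
    rw [Nat.mul_left_cancel_iff hm, Nat.pow_left_inj two_ne_zero, eq_comm]
  simp only [mem_filter, mem_Icc, hsq, mem_insert, mem_singleton]
  omega

theorem coeff_thetaSeries_of_ne {a : ℕ} (ha : ∀ k : ℕ, a ≠ m * k ^ 2) :
    coeff a (thetaSeries m w) = 0 := by
  rw [thetaSeries, coeff_mk, coeff_thetaPoly]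
  exact sum_eq_zero fun x _ => if_neg (ha x.natAbs)

theorem thetaSeries_smodEq_one (hm : 0 < m) (hw : w 0 = 1) :
    thetaSeries m w ≡ 1 [SMOD Ideal.span {X ^ m}] := by
  refine smodEq_X_pow_iff.mpr fun a ha => ?_
  rcases eq_or_ne a 0 with rfl | ha₀
  · simpa [hw, coeff_one] using coeff_thetaSeries_mul_sq (w := w) hm 0
  rw [coeff_thetaSeries_of_ne, coeff_one, if_neg ha₀]
  intro k hk
  rcases k with _ | k
  · simp_all
  · have : m ≤ m * (k + 1) ^ 2 := Nat.le_mul_of_pos_right _ (by positivity)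
    omega

theorem phi_eq_thetaSeries (hm : 0 < m) : phi m = thetaSeries m 1 := by
  ext a
  rw [phi, coeff_mk]
  split_ifs with h₀ hsq
  · subst h₀
    simpa using (coeff_thetaSeries_mul_sq (w := 1) hm 0).symm
  · obtain ⟨k, hk, rfl⟩ := hsq
    rw [coeff_thetaSeries_mul_sq hm, sum_pair (by omega)]
    rfl
  · refine (coeff_thetaSeries_of_ne fun k hk => ?_).symm
    rcases k with _ | k
    · simp_all
    · exact hsq ⟨k + 1, k.succ_pos, hk⟩

theorem phiNeg_eq_thetaSeries : phiNeg = thetaSeries 1 fun x => (x.negOnePow : ℤ) := by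
  ext a
  rw [phiNeg, coeff_mk]
  split_ifs with h₀ hsq
  · subst h₀
    simpa using (coeff_thetaSeries_mul_sq (w := fun x => (x.negOnePow : ℤ)) one_pos 0).symm
  · obtain ⟨k, hk, rfl⟩ := hsq
    have hsgn : (-1 : ℤ) ^ (k ^ 2) = (k : ℤ).negOnePow := by
      rw [← Int.coe_negOnePow_natCast, Nat.cast_pow, sq, Int.negOnePow_mul_self]
    rw [← one_mul (k ^ 2), coeff_thetaSeries_mul_sq one_pos, sum_pair (by omega), one_mul, hsgn,
      Int.negOnePow_neg]
    ring
  · refine (coeff_thetaSeries_of_ne fun k hk => ?_).symm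
    rcases k with _ | k
    · simp_all
    · exact hsq ⟨k + 1, k.succ_pos, by simpa using hk⟩

theorem coeff_thetaSeries_mul (hm : 0 < m) (n : ℕ) (v : ℤ → ℤ) :
    coeff n (thetaSeries m v * thetaSeries m w) = ∑ z ∈ sqAddSqReps m n, v z.1 * w z.2 := by
  have hprod := (thetaSeries_smodEq_thetaPoly (w := v) hm n).mul
    (thetaSeries_smodEq_thetaPoly (w := w) hm n)
  rw [smodEq_X_pow_iff.mp hprod n n.lt_succ_self, thetaPoly, thetaPoly, sum_mul_sum,
    ← sum_product', sqAddSqReps, sum_filter, map_sum]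
  refine sum_congr rfl fun z _ => ?_
  rw [mul_mul_mul_comm, ← map_mul, ← pow_add, coeff_C_mul_X_pow]

theorem thetaSeries_one_mul_negOnePow (hm : 0 < m) :
    thetaSeries m 1 * thetaSeries m (fun x => (x.negOnePow : ℤ)) =
      thetaSeries (2 * m) (fun x => (x.negOnePow : ℤ)) ^ 2 := by
  ext n
  rw [sq, coeff_thetaSeries_mul hm, coeff_thetaSeries_mul (by omega)]
  simpa using sum_negOnePow_snd_sqAddSqReps hm

theorem phiNeg_mul_prod_phi (N : ℕ) :
    phiNeg * ∏ i ∈ range N, phi (2 ^ i) ^ 2 ^ i =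
      thetaSeries (2 ^ N) (fun x => (x.negOnePow : ℤ)) ^ 2 ^ N := by
  induction N with
  | zero => simp [phiNeg_eq_thetaSeries]
  | succ N ih =>
    rw [prod_range_succ, ← mul_assoc, ih, phi_eq_thetaSeries (by positivity), ← mul_pow,
      mul_comm, thetaSeries_one_mul_negOnePow (by positivity), ← pow_mul, ← pow_succ']

theorem phiNeg_mul_seriesProd_phi : phiNeg * seriesProd (fun i => phi (2 ^ i) ^ 2 ^ i) = 1 := by
  refine mul_seriesProd_eq_one (fun i => ?_) fun N => ?_
  · have h := (thetaSeries_smodEq_one (w := 1) (m := 2 ^ i) (by positivity) rfl).pow (2 ^ i)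
    rw [one_pow, ← phi_eq_thetaSeries (by positivity)] at h
    exact h.of_X_pow_le (Nat.lt_two_pow_self)
  · have h := (thetaSeries_smodEq_one (w := fun x => (x.negOnePow : ℤ)) (m := 2 ^ N)
      (by positivity) rfl).pow (2 ^ N)
    rw [one_pow, ← phiNeg_mul_prod_phi] at h
    exact h.of_X_pow_le Nat.lt_two_pow_self.le

end Theta

section Gauss

noncomputable def qPoch (n : ℕ) : ℤ⟦X⟧ := ∏ i ∈ range n, (1 - X ^ (i + 1))

theorem qPoch_two_mul (n : ℕ) :
    qPoch (2 * n) = (∏ i ∈ range n, (1 - X ^ (2 * i + 1))) * qPochSq n := by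
  induction n with
  | zero => simp [qPoch, qPochSq_zero]
  | succ n ih =>
    rw [show 2 * (n + 1) = 2 * n + 1 + 1 by ring, qPoch, prod_range_succ, prod_range_succ,
      ← qPoch, ih, prod_range_succ, qPochSq_succ]
    ring_nf

theorem qBinom_mul_qPochSq_sq_smodEq (q a : ℕ) :
    qBinom (q + 2 * a) q * qPochSq (q + a) ^ 2 ≡ qPochSq (q + a)
      [SMOD Ideal.span {X ^ (2 * q + 2)}] := by
  have hG : ∀ b, q ≤ b → qPochSq b ≡ qPochSq q [SMOD Ideal.span {X ^ (2 * q + 2)}] :=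
    fun b hb => qPochSq_smodEq_of_le hb
  calc qBinom (q + 2 * a) q * qPochSq (q + a) ^ 2
      ≡ qBinom (q + 2 * a) q * (qPochSq (q + 2 * a) * qPochSq q)
        [SMOD Ideal.span {X ^ (2 * q + 2)}] := by
          rw [sq]
          exact SModEq.rfl.mul
            (((hG _ (by omega)).trans (hG _ (by omega)).symm).mul (hG _ (by omega)))
    _ = qPochSq (q + 2 * a + q) := qBinom_mul _ _
    _ ≡ qPochSq (q + a) [SMOD Ideal.span {X ^ (2 * q + 2)}] :=
          (hG _ (by omega)).trans (hG _ (by omega)).symm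

theorem qBinomZ_central_mul_qPochSq_sq_smodEq (n : ℕ) {j : ℤ} (hj : j.natAbs ≤ n) :
    qBinomZ (n + j) (n - j) * qPochSq n ^ 2 ≡ qPochSq n
      [SMOD Ideal.span {X ^ (2 * (n - j.natAbs) + 2)}] := by
  obtain ⟨q, rfl⟩ : ∃ q, n = q + j.natAbs := ⟨n - j.natAbs, by omega⟩
  rw [Nat.add_sub_cancel]
  rcases le_or_gt 0 j with hj₀ | hj₀
  · rw [show ((q + j.natAbs : ℕ) : ℤ) + j = (q + 2 * j.natAbs : ℕ) by omega,
      show ((q + j.natAbs : ℕ) : ℤ) - j = q by omega, qBinomZ_natCast]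
    exact qBinom_mul_qPochSq_sq_smodEq q j.natAbs
  · rw [show ((q + j.natAbs : ℕ) : ℤ) + j = q by omega,
      show ((q + j.natAbs : ℕ) : ℤ) - j = (q + 2 * j.natAbs : ℕ) by omega, qBinomZ_natCast,
      qBinom_comm]
    exact qBinom_mul_qPochSq_sq_smodEq q j.natAbs

theorem qBinomThetaSum_mul_smodEq (n : ℕ) :
    qBinomThetaSum n * qPochSq n ^ 2 ≡ thetaPoly 1 n (fun x => (x.negOnePow : ℤ)) * qPochSq n
      [SMOD Ideal.span {X ^ (2 * n + 1)}] := by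
  rw [qBinomThetaSum, thetaPoly, sum_mul, sum_mul]
  refine SModEq.sum fun j hj => ?_
  have hjn : j.natAbs ≤ n := by simp only [mem_Icc] at hj; omega
  have hexp : 2 * n + 1 ≤ j.natAbs ^ 2 + (2 * (n - j.natAbs) + 2) := by
    have := two_mul_le_add_sq j.natAbs 1
    rw [mul_one, one_pow] at this
    omega
  have h := ((qBinomZ_central_mul_qPochSq_sq_smodEq n hjn).X_pow_mul _).of_X_pow_le hexp
  simp only [signedSq, one_mul, mul_assoc]
  exact SModEq.rfl.mul h

theorem phiNeg_mul_qPochSq_smodEq (n : ℕ) :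
    phiNeg * qPochSq n ≡ qPoch n ^ 2 [SMOD Ideal.span {X ^ (n + 1)}] := by
  calc phiNeg * qPochSq n
      ≡ thetaPoly 1 n (fun x => (x.negOnePow : ℤ)) * qPochSq n
        [SMOD Ideal.span {X ^ (n + 1)}] :=
          (phiNeg_eq_thetaSeries ▸ thetaSeries_smodEq_thetaPoly one_pos n).mul SModEq.rfl
    _ ≡ qBinomThetaSum n * qPochSq n ^ 2 [SMOD Ideal.span {X ^ (n + 1)}] :=
          ((qBinomThetaSum_mul_smodEq n).of_X_pow_le (by omega)).symm
    _ = qPoch (2 * n) ^ 2 := by rw [← prod_one_sub_X_odd_sq, qPoch_two_mul]; ring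
    _ ≡ qPoch n ^ 2 [SMOD Ideal.span {X ^ (n + 1)}] := by
          refine (prod_range_smodEq_of_le (by omega) fun k hk => ?_).pow 2
          exact one_sub_X_pow_smodEq_one (by omega)

end Gauss

section Overpartitions

noncomputable def overFactor (k : ℕ) : ℤ⟦X⟧ :=
  (1 - X ^ (2 * (k + 1))) * invOfUnit (1 - X ^ (k + 1)) 1 ^ 2

theorem one_sub_X_pow_mul_invOfUnit (k : ℕ) :
    (1 - X ^ (k + 1) : ℤ⟦X⟧) * invOfUnit (1 - X ^ (k + 1)) 1 = 1 :=
  mul_invOfUnit _ _ (by simp)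

theorem overGF_eq_seriesProd (t : ℕ) : overGF t = seriesProd fun k => overFactor k ^ t := by
  simp only [overGF, overFactor, mul_pow, ← pow_mul, mul_comm 2 t]

theorem overFactor_smodEq_one (k : ℕ) : overFactor k ≡ 1 [SMOD Ideal.span {X ^ (k + 1)}] := by
  have hinv := (one_sub_X_pow_smodEq_one (R := ℤ) (le_refl (k + 1))).mul
    (SModEq.rfl (x := invOfUnit (1 - X ^ (k + 1) : ℤ⟦X⟧) 1))
  rw [one_sub_X_pow_mul_invOfUnit, one_mul] at hinv
  have hnum := one_sub_X_pow_smodEq_one (R := ℤ) (show k + 1 ≤ 2 * (k + 1) by omega)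
  simpa [overFactor] using hnum.mul (hinv.symm.pow 2)

theorem overGF_eq_pow (t : ℕ) : overGF t = overGF 1 ^ t := by
  rw [overGF_eq_seriesProd, overGF_eq_seriesProd, seriesProd_pow overFactor_smodEq_one]
  simp

theorem phiNeg_mul_overGF_one : phiNeg * overGF 1 = 1 := by
  rw [overGF_eq_seriesProd]
  simp only [pow_one]
  refine mul_seriesProd_eq_one overFactor_smodEq_one fun n => ?_
  set V := ∏ k ∈ range n, invOfUnit (1 - X ^ (k + 1) : ℤ⟦X⟧) 1
  have hV : qPoch n * V = 1 := by
    rw [qPoch, ← prod_mul_distrib]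
    exact prod_eq_one fun k _ => one_sub_X_pow_mul_invOfUnit k
  calc phiNeg * ∏ k ∈ range n, overFactor k = phiNeg * qPochSq n * V ^ 2 := by
        rw [qPochSq, mul_assoc, ← prod_pow, ← prod_mul_distrib]; rfl
    _ ≡ qPoch n ^ 2 * V ^ 2 [SMOD Ideal.span {X ^ n}] :=
        ((phiNeg_mul_qPochSq_smodEq n).of_X_pow_le n.le_succ).mul SModEq.rfl
    _ = 1 := by rw [← mul_pow, hV, one_pow]

end Overpartitions

theorem overpartition_genfun_general (t : ℕ) :
    PowerSeries.mk (fun n => pbar t n) =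
      (seriesProd fun i => phi (2 ^ i) ^ 2 ^ i) ^ t := by
  have hgf : PowerSeries.mk (fun n => pbar t n) = overGF t := ext fun n => coeff_mk _ _
  have hinv : overGF 1 = seriesProd fun i => phi (2 ^ i) ^ 2 ^ i :=
    left_inv_eq_right_inv (mul_comm phiNeg _ ▸ phiNeg_mul_overGF_one) phiNeg_mul_seriesProd_phi
  rw [hgf, overGF_eq_pow, hinv]

/-- For every `t ≥ 1`, `∑_{n ≥ 0} p̄_{-t}(n) qⁿ = ( ∏_{i ≥ 0} φ(q^{2^i})^{2^i} )^t`. -/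
theorem overpartition_genfun (t : ℕ) (ht1 : 1 ≤ t) :
    PowerSeries.mk (fun n => pbar t n) =
      (seriesProd fun i => phi (2 ^ i) ^ 2 ^ i) ^ t :=
  overpartition_genfun_general t
end

section
/- For all odd integers t ≥ 1 and all integers n ≥ 0, the number of t-colored overpartitions of n satisfies: p̄_{-t}(n) ≡ 1 (mod 4) if n = 0; p̄_{-t}(n) ≡ 2 (mod 4) if n is a positive perfect square; and p̄_{-t}(n) ≡ 0 (mod 4) otherwise. -/
open scoped Classical

/-!
Each factor of the product is `(1 - q^{2m})^t / (1 - q^m)^{2t} = (1 + 2 q^m / (1 - q^m))^t`, and in a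
ring where `4 = 0` one has `(1 + 2x)^2 = 1` and `(1 + 2x)(1 + 2y) = 1 + 2(x + y)`. So for odd `t` the
generating function is `1 + 2 ∑_{m ≥ 1} q^m / (1 - q^m) = 1 + 2 ∑_{n ≥ 1} d(n) q^n` modulo `4`, and the
divisor count `d(n)` is odd exactly when `n` is a square, because `d ↦ n / d` pairs off all divisors
except `√n`.
-/

open Finset PowerSeries

theorem Finset.even_card_of_involution {α : Type*} {s : Finset α} (g : α → α)
    (hg_mem : ∀ a ∈ s, g a ∈ s) (hg_invol : ∀ a ∈ s, g (g a) = a) (hg_ne : ∀ a ∈ s, g a ≠ a) :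
    Even #s := by
  have h : ∑ _a ∈ s, (1 : ZMod 2) = 0 :=
    sum_involution (fun a _ => g a) (fun _ _ => by decide) (fun a ha _ => hg_ne a ha)
      hg_mem hg_invol
  simpa [ZMod.natCast_eq_zero_iff, even_iff_two_dvd] using h

theorem Finset.odd_card_iff_odd_card_fixed {α : Type*} {s : Finset α} (g : α → α)
    (hg_mem : ∀ a ∈ s, g a ∈ s) (hg_invol : ∀ a ∈ s, g (g a) = a)
    [DecidablePred fun a => g a = a] :
    Odd #s ↔ Odd #{a ∈ s | g a = a} := by
  have hfree : Even #{a ∈ s | ¬g a = a} := by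
    refine even_card_of_involution g (fun a ha => ?_) (fun a ha => hg_invol a (mem_filter.1 ha).1)
      (fun a ha => (mem_filter.1 ha).2)
    obtain ⟨has, hne⟩ := mem_filter.1 ha
    exact mem_filter.2 ⟨hg_mem a has, by rw [hg_invol a has]; exact Ne.symm hne⟩
  rw [← card_filter_add_card_filter_not (s := s) (p := fun a => g a = a), Nat.odd_add,
    iff_true_intro hfree, iff_true]

theorem Nat.odd_card_divisors_iff {n : ℕ} (hn : n ≠ 0) : Odd #n.divisors ↔ ∃ k, n = k ^ 2 := by
  have hdiv_mem : ∀ d ∈ n.divisors, n / d ∈ n.divisors := fun d hd =>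
    Nat.mem_divisors.2 ⟨Nat.div_dvd_of_dvd (Nat.dvd_of_mem_divisors hd), hn⟩
  have hdiv_div : ∀ d ∈ n.divisors, n / (n / d) = d := fun d hd =>
    Nat.div_div_self (Nat.dvd_of_mem_divisors hd) hn
  have hsq_of_fixed : ∀ d ∈ n.divisors, n / d = d → n = d ^ 2 := fun d hd h => by
    rw [sq, ← Nat.div_mul_cancel (Nat.dvd_of_mem_divisors hd), h]
  rw [odd_card_iff_odd_card_fixed (fun d => n / d) hdiv_mem hdiv_div]
  constructor
  · intro hodd
    obtain ⟨d, hd⟩ := Finset.card_pos.1 hodd.pos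
    obtain ⟨hd, hfix⟩ := mem_filter.1 hd
    exact ⟨d, hsq_of_fixed d hd hfix⟩
  · rintro ⟨k, rfl⟩
    have hk : k ∈ (k ^ 2).divisors := Nat.mem_divisors.2 ⟨Dvd.intro_left _ (sq k).symm, hn⟩
    suffices {d ∈ (k ^ 2).divisors | k ^ 2 / d = d} = {k} by simp [this]
    refine eq_singleton_iff_unique_mem.2 ⟨mem_filter.2 ⟨hk, ?_⟩, fun d hd => ?_⟩
    · rw [sq, Nat.mul_div_cancel _ (Nat.pos_of_mem_divisors hk)]
    · obtain ⟨hd, hfix⟩ := mem_filter.1 hd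
      exact (Nat.pow_left_injective two_ne_zero (hsq_of_fixed d hd hfix)).symm

theorem Nat.cast_card_divisors_eq_sum_range {R : Type*} [AddCommMonoidWithOne R] (n : ℕ) :
    (#n.divisors : R) = ∑ k ∈ range (n + 1), if k + 1 ∈ n.divisors then 1 else 0 := by
  have hsub : n.divisors ⊆ range (n + 2) := fun d hd =>
    mem_range.2 (Nat.lt_succ_of_le ((Nat.divisor_le hd).trans n.le_succ))
  have := sum_range_succ' (fun d => if d ∈ n.divisors then (1 : R) else 0) (n + 1)
  rw [if_neg (by simp), add_zero, sum_ite_mem, inter_eq_right.2 hsub] at this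
  rw [← this, sum_const, nsmul_one]

theorem one_sub_sq_mul_sq_of_one_sub_mul_eq_one {R : Type*} [CommRing R] {a u : R}
    (h : (1 - a) * u = 1) : (1 - a ^ 2) * u ^ 2 = 1 + 2 * (a * u) := by
  linear_combination (1 + (1 + a) * u) * h

namespace PowerSeries

variable {R : Type*} [CommRing R]

theorem one_sub_X_pow_mul_expand_mk_one {m : ℕ} (hm : m ≠ 0) :
    (1 - X ^ m : R⟦X⟧) * expand m hm (mk 1) = 1 := by
  simpa [mul_comm] using congrArg (expand m hm) (mk_one_mul_one_sub_eq_one (S := R))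

theorem invOfUnit_one_sub_X_pow {m : ℕ} (hm : m ≠ 0) :
    invOfUnit (1 - X ^ m : R⟦X⟧) 1 = expand m hm (mk 1) := by
  have hinv := mul_invOfUnit (1 - X ^ m : R⟦X⟧) 1 (by simp [zero_pow hm])
  calc invOfUnit (1 - X ^ m : R⟦X⟧) 1
      = (expand m hm (mk 1) * (1 - X ^ m)) * invOfUnit (1 - X ^ m : R⟦X⟧) 1 := by
        rw [mul_comm (expand m hm _), one_sub_X_pow_mul_expand_mk_one hm, one_mul]
    _ = expand m hm (mk 1) := by rw [mul_assoc, hinv, mul_one]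

theorem coeff_X_pow_mul_invOfUnit_one_sub_X_pow {m : ℕ} (hm : m ≠ 0) (n : ℕ) :
    coeff n (X ^ m * invOfUnit (1 - X ^ m : R⟦X⟧) 1) = if m ∈ n.divisors then 1 else 0 := by
  rw [invOfUnit_one_sub_X_pow hm, mul_comm, coeff_mul_X_pow', coeff_expand, ← ite_and]
  refine if_congr ⟨fun ⟨hmn, hd⟩ => ?_, fun hd => ?_⟩ rfl rfl
  · exact Nat.mem_divisors.2 ⟨(Nat.dvd_sub_iff_left hmn dvd_rfl).1 hd, by omega⟩
  · obtain ⟨hd, hn⟩ := Nat.mem_divisors.1 hd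
    exact ⟨Nat.le_of_dvd (Nat.pos_of_ne_zero hn) hd, Nat.dvd_sub hd dvd_rfl⟩

theorem one_sub_X_pow_two_mul_pow_mul_invOfUnit_pow (t : ℕ) {m : ℕ} (hm : m ≠ 0) :
    (1 - X ^ (2 * m) : R⟦X⟧) ^ t * invOfUnit (1 - X ^ m) 1 ^ (2 * t) =
      (1 + 2 * (X ^ m * invOfUnit (1 - X ^ m) 1)) ^ t := by
  rw [pow_mul' X 2 m, pow_mul _ 2 t, ← mul_pow,
    one_sub_sq_mul_sq_of_one_sub_mul_eq_one (mul_invOfUnit _ _ (by simp [zero_pow hm]))]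

end PowerSeries

section

variable {R : Type*} [CommRing R]

theorem one_add_two_mul_pow_of_odd (h4 : (4 : R) = 0) (x : R) {t : ℕ} (ht : Odd t) :
    (1 + 2 * x) ^ t = 1 + 2 * x := by
  obtain ⟨s, rfl⟩ := ht
  have hsq : (1 + 2 * x) ^ 2 = 1 := by linear_combination (x + x ^ 2) * h4
  rw [pow_succ, pow_mul, hsq, one_pow, one_mul]

theorem prod_one_add_two_mul {ι : Type*} (h4 : (4 : R) = 0) (s : Finset ι) (f : ι → R) :
    ∏ i ∈ s, (1 + 2 * f i) = 1 + 2 * ∑ i ∈ s, f i := by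
  induction s using Finset.induction_on with
  | empty => simp
  | insert a s ha ih =>
    rw [prod_insert ha, ih, sum_insert ha]
    linear_combination (f a * ∑ i ∈ s, f i) * h4

end

theorem pbar_modEq {t : ℕ} (ht : Odd t) (n : ℕ) :
    pbar t n ≡ (if n = 0 then 1 else 0) + 2 * #n.divisors [ZMOD 4] := by
  have h4 : (4 : (ZMod 4)⟦X⟧) = 0 := by
    rw [← map_ofNat (C (R := ZMod 4)) 4, show (4 : ZMod 4) = 0 from rfl, map_zero]
  have hmap (x : ℤ⟦X⟧) : map (Int.castRingHom (ZMod 4)) ((1 + 2 * x) ^ t) =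
      (1 + 2 * map (Int.castRingHom (ZMod 4)) x) ^ t := by
    rw [map_pow, map_add, map_one, map_mul, map_ofNat]
  refine (ZMod.intCast_eq_intCast_iff _ _ 4).1 ?_
  rw [pbar, overGF, seriesProd, coeff_mk]
  simp_rw [one_sub_X_pow_two_mul_pow_mul_invOfUnit_pow t (Nat.succ_ne_zero _)]
  rw [← eq_intCast (Int.castRingHom (ZMod 4)), ← coeff_map, map_prod,
    prod_congr rfl fun k _ => hmap _,
    prod_congr rfl fun k _ => one_add_two_mul_pow_of_odd h4 _ ht, prod_one_add_two_mul h4,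
    map_add, coeff_one, ← map_ofNat C 2, coeff_C_mul, map_sum]
  simp_rw [coeff_map, coeff_X_pow_mul_invOfUnit_one_sub_X_pow (Nat.succ_ne_zero _), apply_ite,
    map_one, map_zero]
  push_cast [Nat.cast_card_divisors_eq_sum_range]
  rfl

theorem pbar_mod_four_general (t : ℕ) (ht : Odd t) (n : ℕ) :
    (n = 0 → pbar t n ≡ 1 [ZMOD 4]) ∧
    ((0 < n ∧ ∃ k : ℕ, n = k ^ 2) → pbar t n ≡ 2 [ZMOD 4]) ∧
    ((n ≠ 0 ∧ ¬ ∃ k : ℕ, n = k ^ 2) → pbar t n ≡ 0 [ZMOD 4]) := by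
  have h := pbar_modEq ht n
  refine ⟨fun hn => ?_, fun ⟨hn, hsq⟩ => ?_, fun ⟨hn, hsq⟩ => ?_⟩
  · simpa [hn] using h
  · obtain ⟨s, hs⟩ := (Nat.odd_card_divisors_iff hn.ne').2 hsq
    rw [if_neg hn.ne', hs] at h
    exact h.trans (by unfold Int.ModEq; push_cast; omega)
  · obtain ⟨s, hs⟩ := Nat.not_odd_iff_even.1 (mt (Nat.odd_card_divisors_iff hn).1 hsq)
    rw [if_neg hn, hs] at h
    exact h.trans (by unfold Int.ModEq; push_cast; omega)

/-- For all odd `t ≥ 1`: `p̄_{-t}(0) ≡ 1 (mod 4)`; `p̄_{-t}(n) ≡ 2 (mod 4)` if `n` is a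
positive perfect square; and `p̄_{-t}(n) ≡ 0 (mod 4)` otherwise. -/
theorem pbar_mod_four (t : ℕ) (ht1 : 1 ≤ t) (ht : Odd t) (n : ℕ) :
    (n = 0 → pbar t n ≡ 1 [ZMOD 4]) ∧
    ((0 < n ∧ ∃ k : ℕ, n = k ^ 2) → pbar t n ≡ 2 [ZMOD 4]) ∧
    ((n ≠ 0 ∧ ¬ ∃ k : ℕ, n = k ^ 2) → pbar t n ≡ 0 [ZMOD 4]) :=
  pbar_mod_four_general t ht n
end

section
/- For all odd integers t ≥ 1 and all integers n ≥ 0, the coefficient of q^{8n+5} in the formal power series ( φ(q)·φ(q²)²·φ(q⁴)⁴ )^t over ℤ is divisible by 8, and the coefficient of q^{8n+6} in the same series is divisible by 8. -/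
/-!
Write `φ(q^m) = 1 + 2 θ_m` with `θ_m = ∑_{k ≥ 1} q^{m k²}`. In any ring with `8 = 0` one has
`(1 + 2x)^t = 1 + 2t x + 4 C(t,2) x²`, and since `f² ≡ f(q²) (mod 2)` (Frobenius),
`4 θ_1² ≡ 4 θ_2` and `4 θ_2² ≡ 4 θ_4 (mod 8)`. Hence
`(φ(q) φ(q²)² φ(q⁴)⁴)^t ≡ 1 + 2t θ_1 + 4(t + C(t,2)) θ_2 + 4t θ_4 (mod 8)`.
Squares are `0, 1, 4 (mod 8)`, so no exponent `≡ 3, 5, 6, 7 (mod 8)` occurs on the right.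
-/

open scoped Classical

open PowerSeries

section EightEqZero

variable {R : Type*} [CommRing R] (h8 : (8 : R) = 0)
include h8

lemma one_add_two_mul_pow_of_eight_eq_zero_s17 (x : R) (t : ℕ) :
    (1 + 2 * x) ^ t = 1 + 2 * t * x + 4 * t.choose 2 * x ^ 2 := by
  induction t with
  | zero => simp
  | succ t ih =>
    rw [pow_succ, ih, Nat.choose_succ_succ', Nat.choose_one_right]
    push_cast
    linear_combination (t.choose 2 * x ^ 3) * h8

lemma one_add_four_mul_pow_of_eight_eq_zero (y : R) (t : ℕ) :
    (1 + 4 * y) ^ t = 1 + 4 * t * y := by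
  linear_combination
    one_add_two_mul_pow_of_eight_eq_zero_s17 h8 (2 * y) t + (2 * t.choose 2 * y ^ 2) * h8

lemma theta_prod_pow_of_eight_eq_zero {a b c : R} (hab : 4 * a ^ 2 = 4 * b)
    (hbc : 4 * b ^ 2 = 4 * c) (t : ℕ) :
    ((1 + 2 * a) * (1 + 2 * b) ^ 2 * (1 + 2 * c) ^ 4) ^ t =
      1 + 2 * t * a + 4 * (t + t.choose 2) * b + 4 * t * c := by
  have hb : (1 + 2 * b) ^ 2 = 1 + 4 * (b + c) := by linear_combination hbc
  have hc : (1 + 2 * c) ^ 4 = 1 := by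
    linear_combination (c + 3 * c ^ 2 + 4 * c ^ 3 + 2 * c ^ 4) * h8
  rw [hb, hc, mul_one, mul_pow, one_add_two_mul_pow_of_eight_eq_zero_s17 h8,
    one_add_four_mul_pow_of_eight_eq_zero h8]
  linear_combination (t.choose 2 : R) * hab
    + (t ^ 2 * a * (b + c) + 2 * t * t.choose 2 * a ^ 2 * (b + c)) * h8

end EightEqZero

noncomputable abbrev reduceMod (d : ℕ) : PowerSeries ℤ →+* PowerSeries (ZMod d) :=
  PowerSeries.map (Int.castRingHom (ZMod d))

lemma coeff_reduceMod_eq_zero_iff (d N : ℕ) (F : PowerSeries ℤ) :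
    coeff N (reduceMod d F) = 0 ↔ (d : ℤ) ∣ coeff N F := by
  simp [ZMod.intCast_zmod_eq_zero_iff_dvd]

lemma reduceMod_two_sq (f : PowerSeries ℤ) :
    reduceMod 2 (f ^ 2) = reduceMod 2 (expand 2 two_ne_zero f) := by
  have hfrob :=
    MvPowerSeries.map_frobenius_expand (R := ZMod 2) 2 two_ne_zero (f := reduceMod 2 f)
  rw [ZMod.frobenius_zmod] at hfrob
  rw [map_pow, ← hfrob, map_expand]
  rfl

lemma four_mul_reduceMod_eight_sq (f : PowerSeries ℤ) :
    4 * reduceMod 8 f ^ 2 = 4 * reduceMod 8 (expand 2 two_ne_zero f) := by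
  rw [← sub_eq_zero, ← mul_sub, ← map_pow, ← map_sub]
  ext N
  have h2 : (2 : ℤ) ∣ coeff N (f ^ 2 - expand 2 two_ne_zero f) := by
    refine (coeff_reduceMod_eq_zero_iff 2 N _).mp ?_
    rw [map_sub, reduceMod_two_sq, sub_self, map_zero]
  obtain ⟨k, hk⟩ := h2
  rw [show (4 : PowerSeries (ZMod 8)) = C 4 from rfl, coeff_C_mul, coeff_map, hk, map_mul,
    ← mul_assoc, map_ofNat, show (4 * 2 : ZMod 8) = 0 from rfl, zero_mul, map_zero]

noncomputable def thetaTail (m : ℕ) : PowerSeries ℤ :=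
  PowerSeries.mk fun n => if ∃ k : ℕ, 0 < k ∧ n = m * k ^ 2 then 1 else 0

lemma phi_eq_one_add_two_mul_thetaTail {m : ℕ} (hm : m ≠ 0) : phi m = 1 + 2 * thetaTail m := by
  ext n
  rw [map_add, show (2 : PowerSeries ℤ) = C 2 from rfl, coeff_C_mul]
  simp only [phi, thetaTail, coeff_mk, coeff_one]
  rcases eq_or_ne n 0 with rfl | hn
  · simpa using fun k hk => ⟨hm, hk.ne'⟩
  · simp [hn]

lemma expand_thetaTail (m : ℕ) : expand 2 two_ne_zero (thetaTail m) = thetaTail (2 * m) := by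
  ext n
  by_cases h2 : 2 ∣ n
  · obtain ⟨j, rfl⟩ := h2
    simp [thetaTail, mul_assoc]
  · rw [coeff_expand_of_not_dvd _ _ _ h2]
    simp only [thetaTail, coeff_mk]
    rw [if_neg]
    rintro ⟨k, -, rfl⟩
    exact h2 ⟨m * k ^ 2, by ring⟩

lemma reduceMod_eight_phi_prod_pow (t : ℕ) :
    reduceMod 8 ((phi 1 * phi 2 ^ 2 * phi 4 ^ 4) ^ t) =
      1 + C (2 * t : ZMod 8) * reduceMod 8 (thetaTail 1)
        + C (4 * (t + t.choose 2) : ZMod 8) * reduceMod 8 (thetaTail 2)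
        + C (4 * t : ZMod 8) * reduceMod 8 (thetaTail 4) := by
  have hsq (m : ℕ) :
      4 * reduceMod 8 (thetaTail m) ^ 2 = 4 * reduceMod 8 (thetaTail (2 * m)) := by
    rw [four_mul_reduceMod_eight_sq, expand_thetaTail]
  simp only [phi_eq_one_add_two_mul_thetaTail one_ne_zero,
    phi_eq_one_add_two_mul_thetaTail two_ne_zero, phi_eq_one_add_two_mul_thetaTail four_ne_zero,
    map_pow, map_mul, map_add, map_one, map_ofNat, map_natCast]
  have h8 : (8 : PowerSeries (ZMod 8)) = 0 := by
    rw [← map_ofNat C 8, show (8 : ZMod 8) = 0 from rfl, map_zero]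
  exact theta_prod_pow_of_eight_eq_zero h8 (hsq 1) (hsq 2) t

lemma coeff_thetaTail_eq_zero {m N : ℕ} (h : ∀ k, N ≠ m * k ^ 2) :
    coeff N (thetaTail m) = 0 := by
  simp [thetaTail, h]

lemma Nat.sq_mod_eight (k : ℕ) : k ^ 2 % 8 = 0 ∨ k ^ 2 % 8 = 1 ∨ k ^ 2 % 8 = 4 := by
  have := Nat.mod_lt k (by norm_num : 0 < 8)
  interval_cases h : k % 8 <;> simp [Nat.pow_mod, h]

lemma eight_dvd_coeff_phi_prod_pow (t : ℕ) {N : ℕ}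
    (hN : N % 8 = 3 ∨ N % 8 = 5 ∨ N % 8 = 6 ∨ N % 8 = 7) :
    (8 : ℤ) ∣ coeff N ((phi 1 * phi 2 ^ 2 * phi 4 ^ 4) ^ t) := by
  have hθ (m : ℕ) (hm : m = 1 ∨ m = 2 ∨ m = 4) : coeff N (thetaTail m) = 0 :=
    coeff_thetaTail_eq_zero fun k hk => by
      have := Nat.sq_mod_eight k
      rcases hm with rfl | rfl | rfl <;> omega
  have hN0 : N ≠ 0 := by omega
  refine (coeff_reduceMod_eq_zero_iff 8 N _).mp ?_
  rw [reduceMod_eight_phi_prod_pow]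
  simp only [map_add, coeff_C_mul, coeff_map, coeff_one, hN0, if_false, hθ 1 (by omega),
    hθ 2 (by omega), hθ 4 (by omega)]
  simp

theorem coeff_phi_prod_pow_5_and_6_general (t : ℕ) (n : ℕ) :
    (8 : ℤ) ∣ PowerSeries.coeff (8 * n + 5) ((phi 1 * phi 2 ^ 2 * phi 4 ^ 4) ^ t) ∧
    (8 : ℤ) ∣ PowerSeries.coeff (8 * n + 6) ((phi 1 * phi 2 ^ 2 * phi 4 ^ 4) ^ t) :=
  ⟨eight_dvd_coeff_phi_prod_pow t (by omega), eight_dvd_coeff_phi_prod_pow t (by omega)⟩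

/-- For all odd `t ≥ 1` and all `n ≥ 0`, the coefficients of `q^(8n+5)` and `q^(8n+6)` in
`(φ(q)·φ(q²)²·φ(q⁴)⁴)^t` are divisible by 8. -/
theorem coeff_phi_prod_pow_5_and_6 (t : ℕ) (ht1 : 1 ≤ t) (ht : Odd t) (n : ℕ) :
    (8 : ℤ) ∣ PowerSeries.coeff (8 * n + 5) ((phi 1 * phi 2 ^ 2 * phi 4 ^ 4) ^ t) ∧
    (8 : ℤ) ∣ PowerSeries.coeff (8 * n + 6) ((phi 1 * phi 2 ^ 2 * phi 4 ^ 4) ^ t) :=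
  coeff_phi_prod_pow_5_and_6_general t n
end
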